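/- arXiv:1108.2521 — 3 statements merged into one kernel-verified Lean document; each statement's English description precedes it below -/
import Mathlib

section
/- In a properly edge-colored graph G that contains a matching M of size δ − 1, every vertex v not covered by M has at most one edge of each color joining it to the endpoints of any single edge of M; consequently, if G is triangle-free, then any vertex v whose neighborhood is contained in the vertices covered by some matching of size δ − 1 together with at most one other vertex has degree at most 2δ − 2 + 1. In particular: in a triangle-free properly edge-colored graph with minimum degree δ that has no rainbow matching of size δ, the maximum degree satisfies Δ(G) ≤ 2δ − 2. -/
/-!
Let `M` be a rainbow matching of size `δ - 1` avoiding `v`. An edge of `M` contains at most one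
neighbour of `v`, since two would span a triangle with `v`. For a neighbour `w` not covered by
`M`, the colour of `vw` must already occur on `M`, for otherwise `M + vw` is a rainbow matching of
size `δ`; and the edges at `v` have distinct colours. Hence `deg v ≤ 2 (δ - 1)`.
-/

open SimpleGraph

/-- A proper edge coloring: distinct edges sharing a vertex get distinct colors. -/
def IsProperEdgeColoring {V : Type*} (G : SimpleGraph V) (c : Sym2 V → ℕ) : Prop :=
  ∀ e₁ ∈ G.edgeSet, ∀ e₂ ∈ G.edgeSet, e₁ ≠ e₂ → (∃ v, v ∈ e₁ ∧ v ∈ e₂) → c e₁ ≠ c e₂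

/-- A rainbow matching: a set of pairwise disjoint edges of `G` with pairwise distinct colors. -/
def IsRainbowMatching {V : Type*} (G : SimpleGraph V) (c : Sym2 V → ℕ)
    (M : Finset (Sym2 V)) : Prop :=
  (M : Set (Sym2 V)) ⊆ G.edgeSet ∧
  (M : Set (Sym2 V)).Pairwise (fun e f => ∀ v, v ∈ e → v ∉ f) ∧
  Set.InjOn c (M : Set (Sym2 V))

section RainbowMatching

open Finset

variable {V : Type*} {G : SimpleGraph V} {c : Sym2 V → ℕ}

theorem IsProperEdgeColoring.eq_of_color_eq (hc : IsProperEdgeColoring G c) {v w₁ w₂ : V}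
    (h₁ : G.Adj v w₁) (h₂ : G.Adj v w₂) (hcol : c s(v, w₁) = c s(v, w₂)) : w₁ = w₂ := by
  by_contra hne
  exact hc _ h₁ _ h₂ (Sym2.congr_right.not.mpr hne)
    ⟨v, Sym2.mem_mk_left _ _, Sym2.mem_mk_left _ _⟩ hcol

theorem IsProperEdgeColoring.subsingleton_adj_color (hc : IsProperEdgeColoring G c)
    (v : V) (k : ℕ) : {w | G.Adj v w ∧ c s(v, w) = k}.Subsingleton :=
  fun _ h₁ _ h₂ => hc.eq_of_color_eq h₁.1 h₂.1 (h₁.2.trans h₂.2.symm)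

theorem IsRainbowMatching.empty : IsRainbowMatching G c ∅ := by
  simp [IsRainbowMatching]

theorem IsRainbowMatching.insert [DecidableEq V] {M : Finset (Sym2 V)}
    (hM : IsRainbowMatching G c M) {v w : V} (hvw : G.Adj v w) (hv : ∀ e ∈ M, v ∉ e)
    (hw : ∀ e ∈ M, w ∉ e) (hcol : ∀ e ∈ M, c e ≠ c s(v, w)) :
    IsRainbowMatching G c (insert s(v, w) M) := by
  obtain ⟨hsub, hdisj, hinj⟩ := hM
  have : Std.Symm (fun e f : Sym2 V => ∀ u, u ∈ e → u ∉ f) :=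
    ⟨fun _ _ h u huf hue => h u hue huf⟩
  refine ⟨?_, ?_, ?_⟩
  · rw [coe_insert, Set.insert_subset_iff]
    exact ⟨hvw, hsub⟩
  · rw [coe_insert, Set.pairwise_insert_of_symm]
    refine ⟨hdisj, fun e he _ u hu => ?_⟩
    rcases Sym2.mem_iff.mp hu with rfl | rfl
    exacts [hv e he, hw e he]
  · rw [coe_insert, Set.injOn_insert fun h => hv _ h (Sym2.mem_mk_left v w)]
    exact ⟨hinj, fun ⟨e, he, hce⟩ => hcol e he hce⟩

section Degree

variable [Fintype V] [DecidableEq V] [DecidableRel G.Adj]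

theorem card_neighborFinset_filter_mem_le_one (htf : G.CliqueFree 3) {e : Sym2 V}
    (he : e ∈ G.edgeSet) (v : V) : #{w ∈ G.neighborFinset v | w ∈ e} ≤ 1 := by
  refine card_le_one.mpr fun a ha b hb => ?_
  simp only [mem_filter, mem_neighborFinset] at ha hb
  by_contra hab
  obtain rfl := (Sym2.mem_and_mem_iff hab).mp ⟨ha.2, hb.2⟩
  exact htf {v, a, b} (is3Clique_triple_iff.mpr ⟨ha.1, hb.1, he⟩)

theorem card_neighborFinset_filter_covered_le (htf : G.CliqueFree 3)
    {M : Finset (Sym2 V)} (hM : (M : Set (Sym2 V)) ⊆ G.edgeSet) (v : V) :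
    #{w ∈ G.neighborFinset v | ∃ e ∈ M, w ∈ e} ≤ #M := by
  have hcover : {w ∈ G.neighborFinset v | ∃ e ∈ M, w ∈ e} ⊆
      M.biUnion fun e => {w ∈ G.neighborFinset v | w ∈ e} := by
    intro w hw
    obtain ⟨hwv, e, he, hwe⟩ := mem_filter.mp hw
    exact mem_biUnion.mpr ⟨e, he, mem_filter.mpr ⟨hwv, hwe⟩⟩
  calc #{w ∈ G.neighborFinset v | ∃ e ∈ M, w ∈ e}
      ≤ #(M.biUnion fun e => {w ∈ G.neighborFinset v | w ∈ e}) := card_le_card hcover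
    _ ≤ #M * 1 := card_biUnion_le_card_mul _ _ _ fun e he =>
        card_neighborFinset_filter_mem_le_one htf (hM he) v
    _ = #M := mul_one _

theorem card_neighborFinset_filter_uncovered_le (hc : IsProperEdgeColoring G c)
    {M : Finset (Sym2 V)} (hM : IsRainbowMatching G c M) {v : V} (hv : ∀ e ∈ M, v ∉ e)
    (hmax : ¬ ∃ M' : Finset (Sym2 V), IsRainbowMatching G c M' ∧ #M' = #M + 1) :
    #{w ∈ G.neighborFinset v | ¬ ∃ e ∈ M, w ∈ e} ≤ #M := by
  refine (card_le_card_of_injOn (t := M.image c) (fun w => c s(v, w)) ?_ ?_).trans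
    card_image_le
  · intro w hw
    simp only [coe_filter, mem_neighborFinset, not_exists, not_and, Set.mem_ofPred_eq] at hw
    obtain ⟨hvw, hw⟩ := hw
    by_contra hnew
    simp only [coe_image, Set.mem_image, mem_coe, not_exists, not_and] at hnew
    refine hmax ⟨_, hM.insert hvw hv hw hnew, card_insert_of_notMem fun hvwM => ?_⟩
    exact hv _ hvwM (Sym2.mem_mk_left v w)
  · intro w₁ hw₁ w₂ hw₂ hcol
    simp only [coe_filter, mem_neighborFinset, Set.mem_ofPred_eq] at hw₁ hw₂
    exact hc.eq_of_color_eq hw₁.1 hw₂.1 hcol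

theorem degree_le_two_mul_card_of_isRainbowMatching (hc : IsProperEdgeColoring G c)
    (htf : G.CliqueFree 3) {M : Finset (Sym2 V)} (hM : IsRainbowMatching G c M) {v : V}
    (hv : ∀ e ∈ M, v ∉ e)
    (hmax : ¬ ∃ M' : Finset (Sym2 V), IsRainbowMatching G c M' ∧ #M' = #M + 1) :
    G.degree v ≤ 2 * #M := by
  rw [← card_neighborFinset_eq_degree,
    ← card_filter_add_card_filter_not (p := fun w => ∃ e ∈ M, w ∈ e)]
  have hcov := card_neighborFinset_filter_covered_le htf hM.1 v
  have hunc := card_neighborFinset_filter_uncovered_le hc hM hv hmax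
  omega

end Degree

end RainbowMatching

theorem triangle_free_max_degree_general {V : Type*} [Fintype V]
    (G : SimpleGraph V) [DecidableRel G.Adj] (c : Sym2 V → ℕ)
    (hc : IsProperEdgeColoring G c) (htf : G.CliqueFree 3)
    (hind : ∀ v : V, ∃ M : Finset (Sym2 V), IsRainbowMatching G c M ∧
      M.card = G.minDegree - 1 ∧ ∀ e ∈ M, v ∉ e)
    (hno : ¬ ∃ M : Finset (Sym2 V), IsRainbowMatching G c M ∧ M.card = G.minDegree) :
    (∀ M : Finset (Sym2 V), (M : Set (Sym2 V)) ⊆ G.edgeSet →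
      (M : Set (Sym2 V)).Pairwise (fun e f => ∀ u, u ∈ e → u ∉ f) →
      M.card = G.minDegree - 1 →
      ∀ v : V, (∀ e ∈ M, v ∉ e) → ∀ e ∈ M, ∀ k : ℕ,
        {w | w ∈ e ∧ G.Adj v w ∧ c s(v, w) = k}.ncard ≤ 1) ∧
    G.maxDegree ≤ 2 * G.minDegree - 2 := by
  classical
  refine ⟨fun M _ _ _ v _ e _ k => ?_, ?_⟩
  · exact Set.ncard_le_one_iff_subsingleton.mpr
      ((hc.subsingleton_adj_color v k).anti fun w hw => hw.2)
  · have hδ : G.minDegree ≠ 0 := fun h => hno ⟨∅, .empty, by simp [h]⟩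
    refine maxDegree_le_of_forall_degree_le _ _ fun v => ?_
    obtain ⟨M, hM, hcard, hv⟩ := hind v
    have hdeg := degree_le_two_mul_card_of_isRainbowMatching hc htf hM hv
      (by rwa [hcard, Nat.sub_add_cancel (Nat.one_le_iff_ne_zero.mpr hδ)])
    omega

/-- In a triangle-free properly edge-colored graph: (1) a vertex `v` uncovered by a matching
`M` of size `δ - 1` has at most one edge of each color joining it to the endpoints of any
single edge of `M`; and (2) if `G - v` has a rainbow matching of size `δ - 1` for every `v`
but `G` has no rainbow matching of size `δ`, then `Δ(G) ≤ 2δ - 2`. -/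
theorem triangle_free_max_degree {V : Type*} [Fintype V] [DecidableEq V]
    (G : SimpleGraph V) [DecidableRel G.Adj] (c : Sym2 V → ℕ)
    (hc : IsProperEdgeColoring G c) (htf : G.CliqueFree 3)
    (hind : ∀ v : V, ∃ M : Finset (Sym2 V), IsRainbowMatching G c M ∧
      M.card = G.minDegree - 1 ∧ ∀ e ∈ M, v ∉ e)
    (hno : ¬ ∃ M : Finset (Sym2 V), IsRainbowMatching G c M ∧ M.card = G.minDegree) :
    (∀ M : Finset (Sym2 V), (M : Set (Sym2 V)) ⊆ G.edgeSet →
      (M : Set (Sym2 V)).Pairwise (fun e f => ∀ u, u ∈ e → u ∉ f) →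
      M.card = G.minDegree - 1 →
      ∀ v : V, (∀ e ∈ M, v ∉ e) → ∀ e ∈ M, ∀ k : ℕ,
        {w | w ∈ e ∧ G.Adj v w ∧ c s(v, w) = k}.ncard ≤ 1) ∧
    G.maxDegree ≤ 2 * G.minDegree - 2 :=
  triangle_free_max_degree_general G c hc htf hind hno
end

section
/- Let h and t be positive integers with t ≤ h, and let f_1, ..., f_h be nonnegative integers such that f_i ≤ 2(h − i) + 1 for all i, and such that the nonincreasing rearrangement f↓ of (f_i) does not majorize the sequence (t+1, t, t−1, ..., 1) (i.e., there exists p ∈ {1, ..., t+1} with f↓_p ≤ t + 1 − p). Then the sum f_1 + ... + f_h is at most t(2h − t). -/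
/-- The nonincreasing rearrangement of a finite sequence, with 1-based indexing
(`sortedDesc f 1` is the largest value); `0` beyond the range. -/
def sortedDesc {n : ℕ} (f : Fin n → ℕ) (p : ℕ) : ℕ :=
  if hp : p - 1 < n then f (Tuple.sort f (Fin.rev ⟨p - 1, hp⟩)) else 0

/-!
Sort `f` increasingly as `g` (0-based). As `f i ≤ 2(h - 1 - i) + 1`, at most `h - j - 1` values
of `f` exceed `2j + 1`, so `g j ≤ 2j + 1`. The hypothesis bounds the `h + 1 - p` smallest values
by `t + 1 - p`. Summing, `∑ f ≤ (h+1-p)(t+1-p) + h² - (h+1-p)² = t(2h - t) - (t+1-p)(h-t)`.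
-/

open Finset

theorem sum_range_two_mul_add_one (n : ℕ) : ∑ j ∈ range n, (2 * j + 1) = n * n := by
  induction n with
  | zero => simp
  | succ k ih => rw [sum_range_succ, ih]; ring

theorem sum_range_ite_lt_two_mul_add_one {a n : ℕ} (han : a ≤ n) (c : ℕ) :
    ∑ j ∈ range n, (if j < a then c else 2 * j + 1) = a * c + (n * n - a * a) := by
  have hsplit := sum_range_add_sum_Ico (fun j => 2 * j + 1) han
  rw [sum_range_two_mul_add_one, sum_range_two_mul_add_one] at hsplit
  rw [← sum_range_add_sum_Ico _ han, sum_congr rfl fun j hj => if_pos (mem_range.mp hj),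
    sum_congr rfl fun j hj => if_neg (mem_Ico.mp hj).1.not_gt, sum_const, card_range,
    smul_eq_mul]
  omega

theorem sub_le_card_filter_sort_le {α : Type*} [LinearOrder α] {n : ℕ} (f : Fin n → α)
    (j : Fin n) : n - j ≤ #{i | f (Tuple.sort f j) ≤ f i} := by
  calc n - j = #((Ici j).map (Tuple.sort f).toEmbedding) := by simp
    _ ≤ _ := card_le_card fun i hi => by
      obtain ⟨k, hk, rfl⟩ := mem_map.mp hi
      simpa using Tuple.monotone_sort f (mem_Ici.mp hk)

theorem sort_le_two_mul_add_one {h : ℕ} {f : Fin h → ℕ}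
    (hf : ∀ i : Fin h, f i ≤ 2 * (h - ((i : ℕ) + 1)) + 1) (j : Fin h) :
    f (Tuple.sort f j) ≤ 2 * j + 1 := by
  by_contra! hlt
  have hsub : ({i | f (Tuple.sort f j) ≤ f i} : Finset (Fin h)) ⊆
      Iio (⟨h - (j + 1), by omega⟩ : Fin h) := fun i hi => by
      have := (mem_filter.mp hi).2.trans (hf i)
      simp only [mem_Iio, Fin.lt_def]
      omega
  have := (sub_le_card_filter_sort_le f j).trans (card_le_card hsub)
  rw [Fin.card_Iio] at this
  simp only at this
  omega

theorem sortedDesc_eq {n p : ℕ} (f : Fin n → ℕ) (hp : 1 ≤ p) (hpn : p ≤ n) :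
    sortedDesc f p = f (Tuple.sort f ⟨n - p, by omega⟩) := by
  rw [sortedDesc, dif_pos (by omega)]
  congr 2
  ext
  simp only [Fin.val_rev]
  omega

theorem sum_le_of_not_majorize_general (h t : ℕ) (hth : t ≤ h) (f : Fin h → ℕ)
    (hf : ∀ i : Fin h, f i ≤ 2 * (h - ((i : ℕ) + 1)) + 1)
    (hmaj : ∃ p : ℕ, 1 ≤ p ∧ p ≤ t + 1 ∧ sortedDesc f p ≤ t + 1 - p) :
    ∑ i, f i ≤ t * (2 * h - t) := by
  obtain ⟨p, hp, hpt, hfp⟩ := hmaj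
  have hbound : ∀ j : Fin h,
      f (Tuple.sort f j) ≤ if (j : ℕ) < h + 1 - p then t + 1 - p else 2 * j + 1 := by
    intro j
    split_ifs with hj
    · rw [sortedDesc_eq f hp (by omega)] at hfp
      exact (Tuple.monotone_sort f (Fin.le_def.mpr (by simp only; omega))).trans hfp
    · exact sort_le_two_mul_add_one hf j
  calc ∑ i, f i = ∑ j, f (Tuple.sort f j) := (Equiv.sum_comp _ f).symm
    _ ≤ ∑ j : Fin h, (if (j : ℕ) < h + 1 - p then t + 1 - p else 2 * j + 1) :=
      sum_le_sum fun j _ => hbound j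
    _ = (h + 1 - p) * (t + 1 - p) + (h * h - (h + 1 - p) * (h + 1 - p)) := by
      rw [Fin.sum_univ_eq_sum_range (fun j => if j < h + 1 - p then t + 1 - p else 2 * j + 1),
        sum_range_ite_lt_two_mul_add_one (by omega)]
    _ ≤ t * (2 * h - t) := by
      have ha : (h + 1 - p) * (h + 1 - p) ≤ h * h := Nat.mul_le_mul (by omega) (by omega)
      zify [ha, show t ≤ 2 * h by omega, hpt, show p ≤ h + 1 by omega]
      nlinarith [mul_nonneg (by omega : (0 : ℤ) ≤ t + 1 - p) (by omega : (0 : ℤ) ≤ h - t)]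

theorem sum_le_of_not_majorize (h t : ℕ) (ht : 0 < t) (hth : t ≤ h) (f : Fin h → ℕ)
    (hf : ∀ i : Fin h, f i ≤ 2 * (h - ((i : ℕ) + 1)) + 1)
    (hmaj : ∃ p : ℕ, 1 ≤ p ∧ p ≤ t + 1 ∧ sortedDesc f p ≤ t + 1 - p) :
    ∑ i, f i ≤ t * (2 * h - t) :=
  sum_le_of_not_majorize_general h t hth f hf hmaj
end

section
/- Every graph G contains a spanning subgraph H with the same minimum degree δ(G) = δ(H) in which every edge is incident to at least one vertex of degree exactly δ(G) in H. -/
open SimpleGraph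
open scoped Classical

/-!
Among the subgraphs of `G` in which every vertex has degree at least `δ(G)`, take a minimal
one `H`. Then `δ(H) = δ(G)`, and if both ends of an edge of `H` had degree greater than
`δ(G)`, deleting that edge would give a smaller subgraph of the same kind.
-/

namespace SimpleGraph

variable {V : Type*} [Fintype V]

lemma neighborFinset_deleteEdges_singleton (H : SimpleGraph V) (u v : V) :
    (H.deleteEdges {s(u, v)}).neighborFinset u = (H.neighborFinset u).erase v := by
  ext w
  simp only [mem_neighborFinset, deleteEdges_adj, Set.mem_singleton_iff, Sym2.congr_right,
    Finset.mem_erase]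
  exact and_comm

lemma neighborFinset_deleteEdges_singleton_of_notMem (H : SimpleGraph V) {e : Sym2 V} {w : V}
    (hw : w ∉ e) : (H.deleteEdges {e}).neighborFinset w = H.neighborFinset w := by
  ext x
  simp only [mem_neighborFinset, deleteEdges_adj, Set.mem_singleton_iff, and_iff_left_iff_imp]
  rintro - rfl
  exact hw (Sym2.mem_mk_left w x)

lemma degree_deleteEdges_singleton (H : SimpleGraph V) {u v : V} (huv : H.Adj u v) :
    (H.deleteEdges {s(u, v)}).degree u = H.degree u - 1 := by
  rw [← card_neighborFinset_eq_degree, neighborFinset_deleteEdges_singleton,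
    Finset.card_erase_of_mem ((H.mem_neighborFinset u v).2 huv), card_neighborFinset_eq_degree]

lemma degree_deleteEdges_singleton_of_notMem (H : SimpleGraph V) {e : Sym2 V} {w : V}
    (hw : w ∉ e) : (H.deleteEdges {e}).degree w = H.degree w := by
  rw [← card_neighborFinset_eq_degree, neighborFinset_deleteEdges_singleton_of_notMem H hw,
    card_neighborFinset_eq_degree]

lemma le_degree_deleteEdges_singleton {H : SimpleGraph V} {k : ℕ} {u v : V} (huv : H.Adj u v)
    (hk : ∀ w, k ≤ H.degree w) (hu : k < H.degree u) (hv : k < H.degree v) (w : V) :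
    k ≤ (H.deleteEdges {s(u, v)}).degree w := by
  by_cases hwu : w = u
  · subst hwu
    rw [degree_deleteEdges_singleton H huv]
    omega
  by_cases hwv : w = v
  · subst hwv
    rw [Sym2.eq_swap, degree_deleteEdges_singleton H huv.symm]
    omega
  rw [degree_deleteEdges_singleton_of_notMem H (by simp [hwu, hwv])]
  exact hk w

lemma degree_eq_or_degree_eq_of_minimal {H : SimpleGraph V} {k : ℕ}
    (hH : Minimal (fun H' : SimpleGraph V => ∀ w, k ≤ H'.degree w) H) {u v : V}
    (huv : H.Adj u v) :
    H.degree u = k ∨ H.degree v = k := by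
  by_contra! hne
  have hu : k < H.degree u := lt_of_le_of_ne (hH.prop u) hne.1.symm
  have hv : k < H.degree v := lt_of_le_of_ne (hH.prop v) hne.2.symm
  have hlt : H.deleteEdges {s(u, v)} < H :=
    (deleteEdges_le _).lt_of_ne fun h => by simpa [huv] using congrArg (Adj · u v) h
  exact hH.not_lt
    (fun w => by convert le_degree_deleteEdges_singleton huv hH.prop hu hv w) hlt

lemma minDegree_eq_of_le {G H : SimpleGraph V} [DecidableRel G.Adj] (hle : H ≤ G)
    (hH : ∀ w, G.minDegree ≤ H.degree w) : H.minDegree = G.minDegree := by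
  cases isEmpty_or_nonempty V
  · simp
  · exact (minDegree_le_minDegree hle).antisymm (le_minDegree_of_forall_le_degree _ _ hH)

end SimpleGraph

theorem exists_spanning_subgraph_min_degree_general {V : Type*} [Fintype V]
    (G : SimpleGraph V) [DecidableRel G.Adj] :
    ∃ H : SimpleGraph V, H ≤ G ∧ H.minDegree = G.minDegree ∧
      ∀ e ∈ H.edgeSet, ∃ v, v ∈ e ∧ H.degree v = G.minDegree := by
  -- `convert` bridges the given `DecidableRel G.Adj` and the classical one in the predicate.
  obtain ⟨H, hle, hH⟩ := exists_minimal_le_of_wellFoundedLT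
    (fun H : SimpleGraph V => ∀ w, G.minDegree ≤ H.degree w) G
    fun w => by convert G.minDegree_le_degree w
  refine ⟨H, hle, minDegree_eq_of_le hle hH.prop, ?_⟩
  rintro ⟨u, v⟩ huv
  rcases degree_eq_or_degree_eq_of_minimal hH huv with h | h
  · exact ⟨u, Sym2.mem_mk_left u v, h⟩
  · exact ⟨v, Sym2.mem_mk_right u v, h⟩

/-- Every graph contains a spanning subgraph with the same minimum degree in which every edge
is incident to a vertex of degree exactly `δ(G)`. -/
theorem exists_spanning_subgraph_min_degree {V : Type*} [Fintype V] [DecidableEq V]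
    (G : SimpleGraph V) [DecidableRel G.Adj] :
    ∃ H : SimpleGraph V, H ≤ G ∧ H.minDegree = G.minDegree ∧
      ∀ e ∈ H.edgeSet, ∃ v, v ∈ e ∧ H.degree v = G.minDegree :=
  exists_spanning_subgraph_min_degree_general G
end
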